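/- Let ℓ > 0 and λ > 0 be real numbers and c ∈ (0,1]. Define f(α) := α^{(ℓ+2)/2} − λ α^{ℓ/2} + λ c^{(ℓ+2)/ℓ} α^{−1} for α > 0, and let x* be the unique positive root of (ℓ+2) x^{(ℓ+4)/2} − ℓλ x^{(ℓ+2)/2} − 2λ c^{(ℓ+2)/ℓ} = 0. Then f is strictly decreasing on (0, x*] and strictly increasing on [x*, ∞). Consequently, the minimum of f over the interval [c^{2/ℓ}, 1] is attained uniquely at α* = min(max(x*, c^{2/ℓ}), 1). -/

import Mathlib

/-- `Φ(x) = (ℓ+2) x^{(ℓ+4)/2} - ℓλ x^{(ℓ+2)/2} - 2λ c^{(ℓ+2)/ℓ}`, proportional to the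
derivative of the one-step greedy cost `f` below. -/
noncomputable def Phi (ℓ lam c x : ℝ) : ℝ :=
  (ℓ + 2) * x ^ ((ℓ + 4) / 2) - ℓ * lam * x ^ ((ℓ + 2) / 2) - 2 * lam * c ^ ((ℓ + 2) / ℓ)

/-- The one-step greedy cost `f(α) = α^{(ℓ+2)/2} - λ α^{ℓ/2} + λ c^{(ℓ+2)/ℓ} α⁻¹`. -/
noncomputable def greedyCost (ℓ lam c α : ℝ) : ℝ :=
  α ^ ((ℓ + 2) / 2) - lam * α ^ (ℓ / 2) + lam * c ^ ((ℓ + 2) / ℓ) * α⁻¹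

/-!
On `(0, ∞)` the derivative of `f` is `Φ(α) / (2α²)`, and `Φ(x) = x^{(ℓ+2)/2} g(x)` with
`g(x) = (ℓ+2) x - ℓλ - 2λ c^{(ℓ+2)/ℓ} x^{-(ℓ+2)/2}` strictly increasing. So `Φ`, hence `f'`,
changes sign exactly once, from negative to positive, at its root `x*`. A function that
decreases up to `x*` and increases after it is minimised on any interval `[a, b]` only
at the point of `[a, b]` closest to `x*`, which is `min (max x* a) b`.
-/

open Set

section Clamp

variable {α β : Type*} [LinearOrder α] [Preorder β] {f : α → β} {m a b x : α}

theorem lt_apply_of_ne_clamp (hanti : StrictAntiOn f (Icc a m)) (hmono : StrictMonoOn f (Ici m))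
    (hx : x ∈ Icc a b) (hne : x ≠ min (max m a) b) : f (min (max m a) b) < f x := by
  obtain ⟨hax, hxb⟩ := hx
  rcases hne.lt_or_gt with hlt | hgt
  · have ham : a < m := by
      by_contra! hma
      exact (hax.trans_lt hlt).not_ge ((min_le_left _ _).trans (max_eq_right hma).le)
    have hclamp_le : min (max m a) b ≤ m := (min_le_left _ _).trans (max_eq_left ham.le).le
    exact hanti ⟨hax, hlt.le.trans hclamp_le⟩ ⟨hax.trans hlt.le, hclamp_le⟩ hlt
  · have hclamp : min (max m a) b = max m a := min_eq_left <| by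
      by_contra! hbm
      exact (hgt.trans_le hxb).ne (min_eq_right hbm.le)
    have hm_le : m ≤ min (max m a) b := hclamp.symm ▸ le_max_left _ _
    exact hmono hm_le (hm_le.trans hgt.le) hgt

end Clamp

noncomputable def phiReduced (ℓ lam c x : ℝ) : ℝ :=
  (ℓ + 2) * x - ℓ * lam - 2 * lam * c ^ ((ℓ + 2) / ℓ) * x ^ (-((ℓ + 2) / 2))

section Cost

variable {ℓ lam c xs : ℝ}

theorem Phi_eq_rpow_mul_phiReduced {x : ℝ} (hx : 0 < x) :
    Phi ℓ lam c x = x ^ ((ℓ + 2) / 2) * phiReduced ℓ lam c x := by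
  have hinv : x ^ ((ℓ + 2) / 2) * x ^ (-((ℓ + 2) / 2)) = 1 := by
    rw [← Real.rpow_add hx, add_neg_cancel, Real.rpow_zero]
  have hsucc : x ^ ((ℓ + 4) / 2) = x ^ ((ℓ + 2) / 2) * x := by
    rw [show (ℓ + 4) / 2 = (ℓ + 2) / 2 + 1 by ring, Real.rpow_add_one hx.ne']
  rw [Phi, phiReduced, hsucc]
  linear_combination (2 * lam * c ^ ((ℓ + 2) / ℓ)) * hinv

theorem strictMonoOn_phiReduced (hℓ : -2 < ℓ) (hlam : 0 ≤ lam) (hc : 0 ≤ c) :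
    StrictMonoOn (phiReduced ℓ lam c) (Ioi 0) := by
  intro x hx y _ hxy
  have hpow : y ^ (-((ℓ + 2) / 2)) ≤ x ^ (-((ℓ + 2) / 2)) :=
    Real.rpow_le_rpow_of_nonpos hx hxy.le (by linarith)
  have hcoef : 0 ≤ 2 * lam * c ^ ((ℓ + 2) / ℓ) := by positivity
  unfold phiReduced
  nlinarith [mul_le_mul_of_nonneg_left hpow hcoef]

theorem phiReduced_eq_zero_of_Phi_eq_zero (hxs : 0 < xs) (hroot : Phi ℓ lam c xs = 0) :
    phiReduced ℓ lam c xs = 0 := by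
  rw [Phi_eq_rpow_mul_phiReduced hxs] at hroot
  exact (mul_eq_zero.mp hroot).resolve_left (Real.rpow_pos_of_pos hxs _).ne'

theorem Phi_neg_of_lt_root (hℓ : -2 < ℓ) (hlam : 0 ≤ lam) (hc : 0 ≤ c) (hxs : 0 < xs)
    (hroot : Phi ℓ lam c xs = 0) {x : ℝ} (hx : 0 < x) (hlt : x < xs) : Phi ℓ lam c x < 0 := by
  have hg : phiReduced ℓ lam c x < 0 :=
    phiReduced_eq_zero_of_Phi_eq_zero hxs hroot ▸
      strictMonoOn_phiReduced hℓ hlam hc hx hxs hlt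
  rw [Phi_eq_rpow_mul_phiReduced hx]
  exact mul_neg_of_pos_of_neg (Real.rpow_pos_of_pos hx _) hg

theorem Phi_pos_of_root_lt (hℓ : -2 < ℓ) (hlam : 0 ≤ lam) (hc : 0 ≤ c) (hxs : 0 < xs)
    (hroot : Phi ℓ lam c xs = 0) {x : ℝ} (hlt : xs < x) : 0 < Phi ℓ lam c x := by
  have hx : 0 < x := hxs.trans hlt
  have hg : 0 < phiReduced ℓ lam c x :=
    phiReduced_eq_zero_of_Phi_eq_zero hxs hroot ▸
      strictMonoOn_phiReduced hℓ hlam hc hxs hx hlt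
  rw [Phi_eq_rpow_mul_phiReduced hx]
  exact mul_pos (Real.rpow_pos_of_pos hx _) hg

theorem hasDerivAt_greedyCost {x : ℝ} (hx : 0 < x) :
    HasDerivAt (greedyCost ℓ lam c) (Phi ℓ lam c x / (2 * x ^ 2)) x := by
  have hmain : HasDerivAt (fun a : ℝ => a ^ ((ℓ + 2) / 2))
      ((ℓ + 2) / 2 * x ^ ((ℓ + 2) / 2 - 1)) x :=
    Real.hasDerivAt_rpow_const (Or.inl hx.ne')
  have hmid : HasDerivAt (fun a : ℝ => a ^ (ℓ / 2)) (ℓ / 2 * x ^ (ℓ / 2 - 1)) x :=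
    Real.hasDerivAt_rpow_const (Or.inl hx.ne')
  refine ((hmain.sub (hmid.const_mul lam)).add
    ((hasDerivAt_inv hx.ne').const_mul (lam * c ^ ((ℓ + 2) / ℓ)))).congr_deriv ?_
  have e1 : x ^ ((ℓ + 2) / 2 - 1) = x ^ (ℓ / 2) := by ring_nf
  have e2 : x ^ ((ℓ + 4) / 2) = x ^ (ℓ / 2) * x ^ 2 := by
    rw [show (ℓ + 4) / 2 = ℓ / 2 + (2 : ℕ) by push_cast; ring, Real.rpow_add_natCast hx.ne']
  have e3 : x ^ ((ℓ + 2) / 2) = x ^ (ℓ / 2) * x := by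
    rw [show (ℓ + 2) / 2 = ℓ / 2 + 1 by ring, Real.rpow_add_one hx.ne']
  rw [Phi, e1, e2, e3, Real.rpow_sub_one hx.ne']
  field_simp
  ring

theorem strictAntiOn_greedyCost (hℓ : -2 < ℓ) (hlam : 0 ≤ lam) (hc : 0 ≤ c) (hxs : 0 < xs)
    (hroot : Phi ℓ lam c xs = 0) : StrictAntiOn (greedyCost ℓ lam c) (Ioc 0 xs) := by
  refine strictAntiOn_of_hasDerivWithinAt_neg (convex_Ioc 0 xs)
    (fun x hx => (hasDerivAt_greedyCost hx.1).continuousAt.continuousWithinAt)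
    (fun x hx => (hasDerivAt_greedyCost (interior_subset hx).1).hasDerivWithinAt)
    (fun x hx => ?_)
  rw [interior_Ioc] at hx
  exact div_neg_of_neg_of_pos (Phi_neg_of_lt_root hℓ hlam hc hxs hroot hx.1 hx.2)
    (by have := hx.1; positivity)

theorem strictMonoOn_greedyCost (hℓ : -2 < ℓ) (hlam : 0 ≤ lam) (hc : 0 ≤ c) (hxs : 0 < xs)
    (hroot : Phi ℓ lam c xs = 0) : StrictMonoOn (greedyCost ℓ lam c) (Ici xs) := by
  refine strictMonoOn_of_hasDerivWithinAt_pos (convex_Ici xs)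
    (fun x hx => (hasDerivAt_greedyCost (hxs.trans_le hx)).continuousAt.continuousWithinAt)
    (fun x hx => (hasDerivAt_greedyCost (hxs.trans_le (interior_subset hx))).hasDerivWithinAt)
    (fun x hx => ?_)
  rw [interior_Ici] at hx
  exact div_pos (Phi_pos_of_root_lt hℓ hlam hc hxs hroot hx) (by have := hxs.trans hx; positivity)

end Cost

/-- If `x*` is the (unique) positive root of `Φ`, then the cost `f` is strictly
decreasing on `(0, x*]` and strictly increasing on `[x*, ∞)`; consequently the minimum
of `f` over `[c^{2/ℓ}, 1]` is attained uniquely at `α* = min(max(x*, c^{2/ℓ}), 1)`. -/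
theorem greedy_cost_minimizer (ℓ lam c : ℝ) (hℓ : 0 < ℓ) (hlam : 0 < lam)
    (hc : c ∈ Set.Ioc (0 : ℝ) 1)
    (xs : ℝ) (hxs : 0 < xs) (hroot : Phi ℓ lam c xs = 0) :
    StrictAntiOn (greedyCost ℓ lam c) (Set.Ioc 0 xs) ∧
    StrictMonoOn (greedyCost ℓ lam c) (Set.Ici xs) ∧
    ∀ α ∈ Set.Icc (c ^ (2 / ℓ)) 1,
      greedyCost ℓ lam c (min (max xs (c ^ (2 / ℓ))) 1) ≤ greedyCost ℓ lam c α ∧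
      (α ≠ min (max xs (c ^ (2 / ℓ))) 1 →
        greedyCost ℓ lam c (min (max xs (c ^ (2 / ℓ))) 1) < greedyCost ℓ lam c α) := by
  have hℓ' : -2 < ℓ := by linarith
  have hanti := strictAntiOn_greedyCost hℓ' hlam.le hc.1.le hxs hroot
  have hmono := strictMonoOn_greedyCost hℓ' hlam.le hc.1.le hxs hroot
  have hlower : 0 < c ^ (2 / ℓ) := Real.rpow_pos_of_pos hc.1 _
  have hmin : ∀ α ∈ Icc (c ^ (2 / ℓ)) 1, α ≠ min (max xs (c ^ (2 / ℓ))) 1 →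
      greedyCost ℓ lam c (min (max xs (c ^ (2 / ℓ))) 1) < greedyCost ℓ lam c α :=
    fun α hα => lt_apply_of_ne_clamp
      (hanti.mono fun x hx => ⟨hlower.trans_le hx.1, hx.2⟩) hmono hα
  refine ⟨hanti, hmono, fun α hα => ⟨?_, hmin α hα⟩⟩
  rcases eq_or_ne α (min (max xs (c ^ (2 / ℓ))) 1) with heq | hne
  · exact heq ▸ le_rfl
  · exact (hmin α hα hne).le
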